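/- arXiv:1808.04807 — 3 statements merged into one kernel-verified Lean document; each statement's English description precedes it below -/
import Mathlib

section
/- Let G be a graph whose vertex set can be partitioned into at most k parts, each inducing a subgraph with internal conductance at least φ. Then the (k+1)-st smallest eigenvalue λ_{k+1} of the normalized Laplacian of G satisfies λ_{k+1} ≥ φ²/2. -/
/-
Write `D` for the degree matrix, `A` for the adjacency matrix and `C_i` for the parts. By the
min–max principle it suffices to show `x ⬝ L x ≥ φ²/2 · ‖x‖²` for every `x` orthogonal to the `k`
vectors `D^{1/2} 1_{C_i}`. With `z = D^{-1/2} x` that orthogonality says that `z` has weighted mean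
zero on every part, and `x ⬝ L x` is the mass of `x` on isolated vertices plus half the Dirichlet
energy `∑_{v,w} A_{vw} (z_v - z_w)²`. On each part Cheeger's argument bounds the energy inside the
part below by `φ² ∑ d_v z_v²`: shift `z` by a weighted median and split it into its positive and
negative parts, each supported on at most half the volume; for such a `g` the co-area inequality
gives `2φ ∑ d g² ≤ ∑ A |g_v² - g_w²|`, and Cauchy–Schwarz turns this into
`φ² ∑ d g² ≤ ∑ A (g_v - g_w)²`. Summing over the parts, and using `φ ≤ 1` on isolated vertices,
gives the bound.
-/

open Matrix Finset

/-- The eigenvalues of a symmetric real matrix, sorted in increasing order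
(junk value `[]` for non-symmetric matrices). -/
noncomputable def sortedEigs {n : Type*} [Fintype n] [DecidableEq n]
    (B : Matrix n n ℝ) : List ℝ :=
  if hB : B.IsHermitian then (Finset.univ.val.map hB.eigenvalues).sort (· ≤ ·) else []

/-- `muSmallest B j` is the `j`-th smallest eigenvalue (1-indexed) of a symmetric
real matrix `B`. -/
noncomputable def muSmallest {n : Type*} [Fintype n] [DecidableEq n]
    (B : Matrix n n ℝ) (j : ℕ) : ℝ :=
  (sortedEigs B).getD (j - 1) 0

/-- The normalized Laplacian `L = I - D^(-1/2) A D^(-1/2)` of a graph. -/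
noncomputable def normLap {V : Type*} [Fintype V] [DecidableEq V]
    (G : SimpleGraph V) [DecidableRel G.Adj] : Matrix V V ℝ :=
  1 - (Matrix.diagonal fun v => (Real.sqrt (G.degree v))⁻¹) * G.adjMatrix ℝ *
      (Matrix.diagonal fun v => (Real.sqrt (G.degree v))⁻¹)

/-- The internal conductance of a vertex subset `C`: the infimum over `S ⊆ C` with
`0 < vol S ≤ vol C / 2` of the number of edges from `S` to `C \ S` divided by `vol S`;
it is `1` when `|C| ≤ 1`. -/
noncomputable def intConductance {V : Type*} [Fintype V] [DecidableEq V]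
    (G : SimpleGraph V) [DecidableRel G.Adj] (C : Finset V) : ℝ :=
  if C.card ≤ 1 then 1 else
    sInf {x : ℝ | ∃ S ⊆ C, 0 < (∑ v ∈ S, (G.degree v : ℝ)) ∧
      2 * (∑ v ∈ S, (G.degree v : ℝ)) ≤ (∑ v ∈ C, (G.degree v : ℝ)) ∧
      x = (∑ v ∈ S, ∑ w ∈ C \ S, if G.Adj v w then (1 : ℝ) else 0) /
            (∑ v ∈ S, (G.degree v : ℝ))}

lemma sq_posPart_add_sq_negPart (a : ℝ) : a⁺ ^ 2 + a⁻ ^ 2 = a ^ 2 := by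
  rcases le_total a 0 with ha | ha
  · simp [posPart_eq_zero.2 ha, negPart_eq_neg.2 ha]
  · simp [posPart_eq_self.2 ha, negPart_eq_zero.2 ha]

lemma sq_sub_posPart_add_sq_sub_negPart_le (a b : ℝ) :
    (a⁺ - b⁺) ^ 2 + (a⁻ - b⁻) ^ 2 ≤ (a - b) ^ 2 := by
  rcases le_total a 0 with ha | ha <;> rcases le_total b 0 with hb | hb <;>
    simp only [posPart_eq_zero.2, negPart_eq_neg.2, posPart_eq_self.2, negPart_eq_zero.2, *] <;>
    nlinarith

section Cheeger

variable {V : Type*} [DecidableEq V] {B : V → V → ℝ} {d : V → ℝ} {C : Finset V} {φ : ℝ}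

/-- The cut form of `φ ≤ intConductance G C`, for edge weights `B` and vertex weights `d`. -/
def ConductanceAtLeast (B : V → V → ℝ) (d : V → ℝ) (C : Finset V) (φ : ℝ) : Prop :=
  ∀ S ⊆ C, 2 * ∑ v ∈ S, d v ≤ ∑ v ∈ C, d v → φ * ∑ v ∈ S, d v ≤ ∑ v ∈ S, ∑ w ∈ C \ S, B v w

lemma sum_sum_ite_mem_and_not_mem {S : Finset V} (hS : S ⊆ C) :
    ∑ v ∈ C, ∑ w ∈ C, (if v ∈ S ∧ w ∉ S then B v w else 0) = ∑ v ∈ S, ∑ w ∈ C \ S, B v w := by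
  have hcut : {p ∈ C ×ˢ C | p.1 ∈ S ∧ p.2 ∉ S} = S ×ˢ (C \ S) := by
    ext ⟨v, w⟩
    simp only [mem_filter, mem_product, mem_sdiff]
    exact ⟨fun h => ⟨h.2.1, h.1.2, h.2.2⟩, fun h => ⟨⟨hS h.1, h.2.1⟩, h.1, h.2.2⟩⟩
  rw [← sum_product', ← sum_filter (fun p : V × V => p.1 ∈ S ∧ p.2 ∉ S) (fun p => B p.1 p.2),
    hcut, sum_product']

lemma sum_sum_mul_abs_sub_eq_add_cut (hB : ∀ v w, B v w = B w v) {S : Finset V} (hS : S ⊆ C)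
    {h : V → ℝ} {α : ℝ} (hα : 0 ≤ α) (hαh : ∀ v ∈ S, α ≤ h v) (hh : ∀ v ∈ C \ S, h v = 0) :
    ∑ v ∈ C, ∑ w ∈ C, B v w * |h v - h w| =
      ∑ v ∈ C, ∑ w ∈ C, B v w * |(h v - if v ∈ S then α else 0) - (h w - if w ∈ S then α else 0)|
        + 2 * α * ∑ v ∈ S, ∑ w ∈ C \ S, B v w := by
  have key : ∀ v ∈ C, ∀ w ∈ C, B v w * |h v - h w| =
      B v w * |(h v - if v ∈ S then α else 0) - (h w - if w ∈ S then α else 0)|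
        + α * ((if v ∈ S ∧ w ∉ S then B v w else 0) + (if w ∈ S ∧ v ∉ S then B w v else 0)) := by
    intro v hv w hw
    by_cases hvS : v ∈ S <;> by_cases hwS : w ∈ S
    · simp [hvS, hwS]
    · have := hαh v hvS
      rw [hh w (mem_sdiff.2 ⟨hw, hwS⟩)]
      simp only [sub_zero, abs_of_nonneg (hα.trans this), hvS, ↓reduceIte, hwS, sub_self,
        abs_of_nonneg (sub_nonneg.2 this), not_false_eq_true, and_self, not_true_eq_false, add_zero]
      ring
    · have := hαh w hwS
      rw [hh v (mem_sdiff.2 ⟨hv, hvS⟩)]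
      simp only [zero_sub, abs_neg, abs_of_nonneg (hα.trans this), hvS, ↓reduceIte, sub_self, hwS,
        neg_sub, not_true_eq_false, and_self, not_false_eq_true, hB w v, zero_add]
      rw [abs_of_nonpos (by linarith)]
      ring
    · simp [hvS, hwS]
  rw [sum_congr rfl fun v hv => sum_congr rfl fun w hw => key v hv w hw]
  simp only [sum_add_distrib, ← mul_sum]
  rw [sum_comm (f := fun v w => if w ∈ S ∧ v ∉ S then B w v else 0),
    sum_sum_ite_mem_and_not_mem hS]
  ring

/-- The discrete co-area inequality. -/
lemma two_mul_mul_sum_le_sum_sum_mul_abs_sub (hB : ∀ v w, B v w = B w v) (hd : ∀ v, 0 ≤ d v)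
    (hC : ConductanceAtLeast B d C φ) {h : V → ℝ} (hh : ∀ v ∈ C, 0 ≤ h v)
    (hsupp : 2 * ∑ v ∈ C with h v ≠ 0, d v ≤ ∑ v ∈ C, d v) :
    2 * φ * ∑ v ∈ C, d v * h v ≤ ∑ v ∈ C, ∑ w ∈ C, B v w * |h v - h w| := by
  obtain ⟨n, hn⟩ : ∃ n, #{v ∈ C | h v ≠ 0} ≤ n := ⟨_, le_rfl⟩
  induction n generalizing h with
  | zero =>
    have hzero : ∀ v ∈ C, h v = 0 := fun v hv => by
      by_contra hne
      exact (card_pos.2 ⟨v, mem_filter.2 ⟨hv, hne⟩⟩).ne' (Nat.le_zero.1 hn)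
    rw [sum_eq_zero fun v hv => by rw [hzero v hv, mul_zero],
      sum_eq_zero fun v hv => sum_eq_zero fun w hw => by
        rw [hzero v hv, hzero w hw, sub_self, abs_zero, mul_zero], mul_zero]
  | succ n ih =>
    set S := {v ∈ C | h v ≠ 0}
    obtain hS | hS := S.eq_empty_or_nonempty
    · exact ih hh hsupp ((card_eq_zero.2 hS).trans_le n.zero_le)
    -- the bottom layer of `h` is the constant `α` on its support `S`
    obtain ⟨v₀, hv₀, hmin⟩ := S.exists_min_image h hS
    set α := h v₀
    have hSC : S ⊆ C := filter_subset _ _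
    have hα : 0 < α := (hh v₀ (hSC hv₀)).lt_of_ne' (mem_filter.1 hv₀).2
    have hzero : ∀ v ∈ C \ S, h v = 0 := fun v hv => by
      by_contra hne
      exact (mem_sdiff.1 hv).2 (mem_filter.2 ⟨(mem_sdiff.1 hv).1, hne⟩)
    set h' : V → ℝ := fun v => h v - if v ∈ S then α else 0
    have hh' : ∀ v ∈ C, 0 ≤ h' v := fun v hv => by
      by_cases hvS : v ∈ S <;> simp [h', hvS, hmin v, hh v hv]
    have hsupp' : {v ∈ C | h' v ≠ 0} ⊆ S.erase v₀ := fun v hv => by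
      obtain ⟨hvC, hne⟩ := mem_filter.1 hv
      by_cases hvS : v ∈ S
      · exact mem_erase.2 ⟨fun hvv => hne (by subst hvv; simp [h', hvS, α]), hvS⟩
      · exact absurd (by simp [h', hvS, hzero v (mem_sdiff.2 ⟨hvC, hvS⟩)]) hne
    have ih' := ih hh'
      (hsupp.trans' <| mul_le_mul_of_nonneg_left (sum_le_sum_of_subset_of_nonneg
        (hsupp'.trans (erase_subset _ _)) fun v _ _ => hd v) zero_le_two)
      ((card_le_card hsupp').trans (by rw [card_erase_of_mem hv₀]; omega))
    have hmass : ∑ v ∈ C, d v * h v = ∑ v ∈ C, d v * h' v + α * ∑ v ∈ S, d v := by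
      simp only [h', mul_sub, sum_sub_distrib, mul_ite, mul_zero, sum_ite_mem,
        inter_eq_right.2 hSC, ← sum_mul]
      ring
    have hcut := mul_le_mul_of_nonneg_left (hC S hSC hsupp) (by positivity : (0 : ℝ) ≤ 2 * α)
    rw [hmass, sum_sum_mul_abs_sub_eq_add_cut hB hSC hα.le hmin hzero]
    linarith

omit [DecidableEq V] in
lemma sum_sum_mul_add_sq_le (hB0 : ∀ v w, 0 ≤ B v w) (hB : ∀ v w, B v w = B w v)
    (hBd : ∀ v ∈ C, ∑ w ∈ C, B v w ≤ d v) (g : V → ℝ) :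
    ∑ v ∈ C, ∑ w ∈ C, B v w * (g v + g w) ^ 2 ≤ 4 * ∑ v ∈ C, d v * g v ^ 2 :=
  calc ∑ v ∈ C, ∑ w ∈ C, B v w * (g v + g w) ^ 2
      ≤ ∑ v ∈ C, ∑ w ∈ C, (2 * (B v w * g v ^ 2) + 2 * (B w v * g w ^ 2)) :=
        sum_le_sum fun v _ => sum_le_sum fun w _ => by
          rw [hB w v]; nlinarith [mul_nonneg (hB0 v w) (sq_nonneg (g v - g w))]
    _ = 4 * ∑ v ∈ C, (∑ w ∈ C, B v w) * g v ^ 2 := by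
        simp only [sum_add_distrib, ← mul_sum, ← sum_mul]
        rw [sum_comm (f := fun v w => B w v * g w ^ 2)]
        simp only [← sum_mul, mul_sum, ← sum_add_distrib]
        exact sum_congr rfl fun v _ => by ring
    _ ≤ 4 * ∑ v ∈ C, d v * g v ^ 2 := by
        gcongr with v hv
        exact hBd v hv

lemma sq_mul_sum_le_of_support (hB0 : ∀ v w, 0 ≤ B v w) (hB : ∀ v w, B v w = B w v)
    (hBd : ∀ v ∈ C, ∑ w ∈ C, B v w ≤ d v) (hd : ∀ v, 0 ≤ d v) (hφ : 0 ≤ φ)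
    (hC : ConductanceAtLeast B d C φ) {g : V → ℝ}
    (hsupp : 2 * ∑ v ∈ C with g v ≠ 0, d v ≤ ∑ v ∈ C, d v) :
    φ ^ 2 * ∑ v ∈ C, d v * g v ^ 2 ≤ ∑ v ∈ C, ∑ w ∈ C, B v w * (g v - g w) ^ 2 := by
  set D := ∑ v ∈ C, d v * g v ^ 2
  set N := ∑ v ∈ C, ∑ w ∈ C, B v w * (g v - g w) ^ 2
  set K := ∑ v ∈ C, ∑ w ∈ C, B v w * |g v ^ 2 - g w ^ 2|
  have hcoarea : 2 * φ * D ≤ K := by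
    refine two_mul_mul_sum_le_sum_sum_mul_abs_sub hB hd hC (fun v hv => sq_nonneg (g v)) ?_
    simpa only [ne_eq, pow_eq_zero_iff two_ne_zero] using hsupp
  -- Cauchy–Schwarz, after factoring `|a² - b²| = |a - b| |a + b|`
  have hCS : K ^ 2 ≤ N * (4 * D) := by
    refine le_trans ?_ (mul_le_mul_of_nonneg_left (sum_sum_mul_add_sq_le hB0 hB hBd g)
      (sum_nonneg fun v _ => sum_nonneg fun w _ => mul_nonneg (hB0 v w) (sq_nonneg _)))
    simp only [K, N, ← sum_product']
    refine sum_sq_le_sum_mul_sum_of_sq_le_mul _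
      (fun p _ => mul_nonneg (hB0 _ _) (sq_nonneg _))
      (fun p _ => mul_nonneg (hB0 _ _) (sq_nonneg _))
      fun p _ => le_of_eq ?_
    rw [mul_pow, sq_abs]
    ring
  have hD : 0 ≤ D := sum_nonneg fun v _ => mul_nonneg (hd v) (sq_nonneg _)
  have hN : 0 ≤ N := sum_nonneg fun v _ => sum_nonneg fun w _ => mul_nonneg (hB0 v w) (sq_nonneg _)
  rcases hD.eq_or_lt with hD0 | hDpos
  · rw [← hD0, mul_zero]; exact hN
  refine le_of_mul_le_mul_right ?_ (by positivity : 0 < 4 * D)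
  calc φ ^ 2 * D * (4 * D) = (2 * φ * D) ^ 2 := by ring
    _ ≤ K ^ 2 := pow_le_pow_left₀ (by positivity) hcoarea 2
    _ ≤ N * (4 * D) := hCS

omit [DecidableEq V] in
lemma exists_weighted_median (hd : ∀ v, 0 ≤ d v) (z : V → ℝ) :
    ∃ c, 2 * ∑ v ∈ C with c < z v, d v ≤ ∑ v ∈ C, d v ∧
      2 * ∑ v ∈ C with z v < c, d v ≤ ∑ v ∈ C, d v := by
  obtain rfl | hC := C.eq_empty_or_nonempty
  · exact ⟨0, by simp⟩
  have hvolC : 0 ≤ ∑ v ∈ C, d v := sum_nonneg fun v _ => hd v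
  -- `c` is the least value of `z` above which lies at most half of the weight
  set T := {v ∈ C | 2 * ∑ w ∈ C with z v < z w, d w ≤ ∑ w ∈ C, d w}
  have hT : T.Nonempty := by
    obtain ⟨v, hv, hmax⟩ := C.exists_max_image z hC
    refine ⟨v, mem_filter.2 ⟨hv, ?_⟩⟩
    rw [filter_false_of_mem fun w hw => not_lt.2 (hmax w hw), sum_empty]
    linarith
  obtain ⟨v₀, hv₀, hmin⟩ := T.exists_min_image z hT
  refine ⟨z v₀, (mem_filter.1 hv₀).2, ?_⟩
  set U := {w ∈ C | z w < z v₀}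
  obtain hU | hU := U.eq_empty_or_nonempty
  · rw [hU, sum_empty]; linarith
  obtain ⟨u, hu, humax⟩ := U.exists_max_image z hU
  have huC : u ∈ C := (mem_filter.1 hu).1
  have hup : {w ∈ C | z u < z w} = {w ∈ C | ¬ z w < z v₀} := filter_congr fun w hw =>
    ⟨fun hlt hw₀ => (humax w (mem_filter.2 ⟨hw, hw₀⟩)).not_gt hlt,
      fun hw₀ => (mem_filter.1 hu).2.trans_le (not_lt.1 hw₀)⟩
  have huT : u ∉ T := fun h => (hmin u h).not_gt (mem_filter.1 hu).2
  simp only [T, mem_filter, huC, true_and, not_le, hup] at huT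
  linarith [sum_filter_add_sum_filter_not C (fun w => z w < z v₀) d]

omit [DecidableEq V] in
lemma sum_mul_sq_le_sum_mul_sub_sq_of_sum_mul_eq_zero (hd : ∀ v, 0 ≤ d v) {z : V → ℝ}
    (hz : ∑ v ∈ C, d v * z v = 0) (c : ℝ) :
    ∑ v ∈ C, d v * z v ^ 2 ≤ ∑ v ∈ C, d v * (z v - c) ^ 2 := by
  have : ∑ v ∈ C, d v * (z v - c) ^ 2 =
      ∑ v ∈ C, d v * z v ^ 2 - 2 * c * ∑ v ∈ C, d v * z v + c ^ 2 * ∑ v ∈ C, d v := by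
    simp only [mul_sum, ← sum_sub_distrib, ← sum_add_distrib]
    exact sum_congr rfl fun v _ => by ring
  rw [this, hz]
  nlinarith [sum_nonneg fun v (_ : v ∈ C) => hd v, sq_nonneg c]

lemma sq_mul_sum_le_of_sum_mul_eq_zero (hB0 : ∀ v w, 0 ≤ B v w) (hB : ∀ v w, B v w = B w v)
    (hBd : ∀ v ∈ C, ∑ w ∈ C, B v w ≤ d v) (hd : ∀ v, 0 ≤ d v) (hφ : 0 ≤ φ)
    (hC : ConductanceAtLeast B d C φ) {z : V → ℝ} (hz : ∑ v ∈ C, d v * z v = 0) :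
    φ ^ 2 * ∑ v ∈ C, d v * z v ^ 2 ≤ ∑ v ∈ C, ∑ w ∈ C, B v w * (z v - z w) ^ 2 := by
  obtain ⟨c, hup, hlow⟩ := exists_weighted_median (C := C) hd z
  have hpos := sq_mul_sum_le_of_support hB0 hB hBd hd hφ hC (g := fun v => (z v - c)⁺)
    (by simpa only [ne_eq, posPart_eq_zero, not_le, sub_pos] using hup)
  have hneg := sq_mul_sum_le_of_support hB0 hB hBd hd hφ hC (g := fun v => (z v - c)⁻)
    (by simpa only [ne_eq, negPart_eq_zero, not_le, sub_neg] using hlow)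
  have hsplit : ∑ v ∈ C, d v * (z v - c) ^ 2 =
      ∑ v ∈ C, d v * ((z v - c)⁺) ^ 2 + ∑ v ∈ C, d v * ((z v - c)⁻) ^ 2 := by
    rw [← sum_add_distrib]
    exact sum_congr rfl fun v _ => by rw [← mul_add, sq_posPart_add_sq_negPart]
  have henergy : ∑ v ∈ C, ∑ w ∈ C, B v w * ((z v - c)⁺ - (z w - c)⁺) ^ 2 +
      ∑ v ∈ C, ∑ w ∈ C, B v w * ((z v - c)⁻ - (z w - c)⁻) ^ 2 ≤
      ∑ v ∈ C, ∑ w ∈ C, B v w * (z v - z w) ^ 2 := by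
    simp only [← sum_add_distrib, ← mul_add]
    refine sum_le_sum fun v _ => sum_le_sum fun w _ => mul_le_mul_of_nonneg_left ?_ (hB0 v w)
    simpa using sq_sub_posPart_add_sq_sub_negPart_le (z v - c) (z w - c)
  calc φ ^ 2 * ∑ v ∈ C, d v * z v ^ 2
      ≤ φ ^ 2 * ∑ v ∈ C, d v * (z v - c) ^ 2 :=
        mul_le_mul_of_nonneg_left (sum_mul_sq_le_sum_mul_sub_sq_of_sum_mul_eq_zero hd hz c)
          (sq_nonneg φ)
    _ ≤ _ := by rw [hsplit, mul_add]; linarith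

lemma sq_mul_sum_le_of_fiberwise [Fintype V] {ι : Type*} [Fintype ι] [DecidableEq ι]
    (hB0 : ∀ v w, 0 ≤ B v w) (hB : ∀ v w, B v w = B w v) (hBd : ∀ v, ∑ w, B v w ≤ d v)
    (hd : ∀ v, 0 ≤ d v) (hφ : 0 ≤ φ) (p : V → ι)
    (hC : ∀ i, ConductanceAtLeast B d {v | p v = i} φ) {z : V → ℝ}
    (hz : ∀ i, ∑ v with p v = i, d v * z v = 0) :
    φ ^ 2 * ∑ v, d v * z v ^ 2 ≤ ∑ v, ∑ w, B v w * (z v - z w) ^ 2 := by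
  have hBd' : ∀ i, ∀ v ∈ ({v | p v = i} : Finset V), ∑ w with p w = i, B v w ≤ d v :=
    fun i v _ => (sum_le_sum_of_subset_of_nonneg (subset_univ _) fun w _ _ => hB0 v w).trans (hBd v)
  calc φ ^ 2 * ∑ v, d v * z v ^ 2
      = ∑ i, φ ^ 2 * ∑ v with p v = i, d v * z v ^ 2 := by rw [← mul_sum, sum_fiberwise]
    _ ≤ ∑ i, ∑ v with p v = i, ∑ w with p w = i, B v w * (z v - z w) ^ 2 :=
        sum_le_sum fun i _ =>
          sq_mul_sum_le_of_sum_mul_eq_zero hB0 hB (hBd' i) hd hφ (hC i) (hz i)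
    _ = ∑ v, ∑ w with p w = p v, B v w * (z v - z w) ^ 2 := by
        rw [← sum_fiberwise univ p fun v => ∑ w with p w = p v, B v w * (z v - z w) ^ 2]
        refine sum_congr rfl fun i _ => sum_congr rfl fun v hv => ?_
        rw [(mem_filter.1 hv).2]
    _ ≤ ∑ v, ∑ w, B v w * (z v - z w) ^ 2 :=
        sum_le_sum fun v _ => sum_le_sum_of_subset_of_nonneg (subset_univ _)
          fun w _ _ => mul_nonneg (hB0 v w) (sq_nonneg _)

end Cheeger

namespace SimpleGraph

variable {V : Type*} [Fintype V] [DecidableEq V] (G : SimpleGraph V) [DecidableRel G.Adj]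

def cutRatios (C : Finset V) : Set ℝ :=
  {x : ℝ | ∃ S ⊆ C, 0 < (∑ v ∈ S, (G.degree v : ℝ)) ∧
      2 * (∑ v ∈ S, (G.degree v : ℝ)) ≤ (∑ v ∈ C, (G.degree v : ℝ)) ∧
      x = (∑ v ∈ S, ∑ w ∈ C \ S, if G.Adj v w then (1 : ℝ) else 0) /
            (∑ v ∈ S, (G.degree v : ℝ))}

lemma intConductance_def (C : Finset V) :
    intConductance G C = if #C ≤ 1 then 1 else sInf (cutRatios G C) := rfl

lemma bddBelow_cutRatios (C : Finset V) : BddBelow (cutRatios G C) := by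
  refine ⟨0, ?_⟩
  rintro _ ⟨S, -, hS, -, rfl⟩
  exact div_nonneg (sum_nonneg fun v _ => sum_nonneg fun w _ => by positivity) hS.le

lemma intConductance_le_one (C : Finset V) : intConductance G C ≤ 1 := by
  rw [intConductance_def]
  split_ifs
  · exact le_rfl
  obtain hX | ⟨x, hx⟩ := (cutRatios G C).eq_empty_or_nonempty
  · rw [hX, Real.sInf_empty]; exact zero_le_one
  refine (csInf_le (bddBelow_cutRatios G C) hx).trans ?_
  obtain ⟨S, -, hS, -, rfl⟩ := hx
  rw [div_le_one hS]
  refine sum_le_sum fun v _ => ?_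
  rw [G.degree_eq_sum_if_adj]
  exact sum_le_sum_of_subset_of_nonneg (subset_univ _) fun w _ _ => by positivity

lemma conductanceAtLeast_of_le_intConductance {C : Finset V} {φ : ℝ}
    (hφ : φ ≤ intConductance G C) :
    ConductanceAtLeast (G.adjMatrix ℝ) (fun v => (G.degree v : ℝ)) C φ := by
  intro S hSC hvol
  simp only [adjMatrix_apply] at hvol ⊢
  have hS : (0 : ℝ) ≤ ∑ v ∈ S, (G.degree v : ℝ) := sum_nonneg fun v _ => Nat.cast_nonneg _
  obtain hS | hS := hS.eq_or_lt
  · rw [← hS, mul_zero]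
    exact sum_nonneg fun v _ => sum_nonneg fun w _ => by positivity
  rw [intConductance_def, if_neg] at hφ
  · rw [← le_div_iff₀ hS]
    exact hφ.trans (csInf_le (bddBelow_cutRatios G C) ⟨S, hSC, hS, hvol, rfl⟩)
  -- if `#C ≤ 1` then `S = C`, which contradicts `0 < vol S ≤ vol C / 2`
  intro hC
  obtain ⟨v, hv⟩ := nonempty_of_sum_ne_zero hS.ne'
  rw [eq_of_subset_of_card_le hSC (hC.trans (card_pos.2 ⟨v, hv⟩))] at hS hvol
  linarith

lemma dotProduct_adjMatrix_mulVec (z : V → ℝ) :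
    z ⬝ᵥ (G.adjMatrix ℝ *ᵥ z) = ∑ v, G.degree v * z v ^ 2 -
      (∑ v, ∑ w, G.adjMatrix ℝ v w * (z v - z w) ^ 2) / 2 := by
  have hlap := G.lapMatrix_toLinearMap₂' ℝ z
  rw [toLinearMap₂'_apply', lapMatrix, sub_mulVec, dotProduct_sub,
    dotProduct_mulVec_degMatrix] at hlap
  simp only [adjMatrix_apply, ite_mul, one_mul, zero_mul, mul_assoc, ← sq] at hlap ⊢
  linarith

lemma dotProduct_normLap_mulVec (x : V → ℝ) :
    x ⬝ᵥ (normLap G *ᵥ x) = x ⬝ᵥ x - ∑ v, G.degree v * (x v / √(G.degree v)) ^ 2 +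
      (∑ v, ∑ w, G.adjMatrix ℝ v w *
        (x v / √(G.degree v) - x w / √(G.degree w)) ^ 2) / 2 := by
  have hz : (diagonal fun v => (√(G.degree v))⁻¹) *ᵥ x = fun v => x v / √(G.degree v) := by
    ext v; rw [mulVec_diagonal, div_eq_inv_mul]
  have hz' : x ᵥ* (diagonal fun v => (√(G.degree v))⁻¹) = fun v => x v / √(G.degree v) := by
    ext v; rw [vecMul_diagonal, div_eq_mul_inv]
  rw [normLap, sub_mulVec, one_mulVec, dotProduct_sub, ← mulVec_mulVec, ← mulVec_mulVec,
    dotProduct_mulVec, hz, hz', dotProduct_adjMatrix_mulVec]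
  ring

lemma isHermitian_normLap : (normLap G).IsHermitian := by
  refine isHermitian_one.sub ?_
  simpa using isHermitian_mul_mul_conjTranspose (diagonal fun v => (√(G.degree v))⁻¹)
    (G.isHermitian_adjMatrix ℝ)

omit [DecidableEq V] in
lemma sum_degree_mul_div_sqrt_sq_le (x : V → ℝ) :
    ∑ v, G.degree v * (x v / √(G.degree v)) ^ 2 ≤ x ⬝ᵥ x := by
  refine sum_le_sum fun v _ => ?_
  rw [div_pow, Real.sq_sqrt (Nat.cast_nonneg _), mul_div_left_comm, ← sq]
  exact mul_le_of_le_one_right (sq_nonneg _) (div_self_le_one (G.degree v : ℝ))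

lemma le_dotProduct_normLap_mulVec {ι : Type*} [Fintype ι] [DecidableEq ι] (p : V → ι)
    {φ : ℝ} (hφ : 0 ≤ φ) (hφ1 : φ ≤ 1) (hp : ∀ i, φ ≤ intConductance G {v | p v = i})
    {x : V → ℝ} (hx : ∀ i, ∑ v with p v = i, √(G.degree v) * x v = 0) :
    φ ^ 2 / 2 * (x ⬝ᵥ x) ≤ x ⬝ᵥ (normLap G *ᵥ x) := by
  have hdx : ∀ v, (G.degree v : ℝ) * (x v / √(G.degree v)) = √(G.degree v) * x v := fun v => by
    rw [mul_div_left_comm, Real.div_sqrt, mul_comm]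
  have henergy := sq_mul_sum_le_of_fiberwise (B := G.adjMatrix ℝ) (d := fun v => (G.degree v : ℝ))
    (fun v w => by rw [adjMatrix_apply]; positivity)
    (fun v w => by simp only [adjMatrix_apply, G.adj_comm])
    (fun v => by simp only [adjMatrix_apply, ← G.degree_eq_sum_if_adj, le_refl])
    (fun v => Nat.cast_nonneg _) hφ p (fun i => G.conductanceAtLeast_of_le_intConductance (hp i))
    (z := fun v => x v / √(G.degree v)) (fun i => by simpa only [hdx] using hx i)
  have hmass := G.sum_degree_mul_div_sqrt_sq_le x
  have hφ2 : φ ^ 2 / 2 ≤ 1 := by nlinarith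
  rw [dotProduct_normLap_mulVec]
  linarith [mul_nonneg (sub_nonneg.2 hφ2) (sub_nonneg.2 hmass)]

end SimpleGraph

lemma List.Pairwise.succ_le_countP_le_getElem {α : Type*} [Preorder α] [DecidableLE α] {l : List α}
    (hl : l.Pairwise (· ≤ ·)) {i : ℕ} (hi : i < l.length) :
    i + 1 ≤ l.countP (fun a => Decidable.decide (a ≤ l[i])) :=
  calc i + 1 = (l.take (i + 1)).length := by rw [List.length_take]; omega
    _ = (l.take (i + 1)).countP (fun a => Decidable.decide (a ≤ l[i])) := by
        refine (List.countP_eq_length.2 fun a ha => ?_).symm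
        obtain ⟨j, hj, rfl⟩ := List.mem_take_iff_getElem.1 ha
        simpa using hl.rel_get_of_le (a := ⟨j, by omega⟩) (b := ⟨i, hi⟩) (by simp; omega)
    _ ≤ l.countP (fun a => Decidable.decide (a ≤ l[i])) := (List.take_sublist _ _).countP_le

lemma exists_ne_zero_mulVec_sum_smul_eq_zero {K ι κ m : Type*} [Field K] [Fintype ι]
    [Fintype κ] [Fintype m] (P : Matrix ι m K) (w : κ → m → K)
    (h : Fintype.card ι < Fintype.card κ) : ∃ a : κ → K, a ≠ 0 ∧ P *ᵥ ∑ j, a j • w j = 0 := by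
  obtain ⟨a, ha, ha0⟩ := Submodule.exists_mem_ne_zero_of_ne_bot <|
    LinearMap.ker_ne_bot_of_finrank_lt (f := P.mulVecLin ∘ₗ Fintype.linearCombination K w)
      (by simpa using h)
  exact ⟨a, ha0, by simpa [Fintype.linearCombination_apply, mulVec_sum, mulVec_smul] using ha⟩

namespace Matrix.IsHermitian

variable {n : Type*} [Fintype n] [DecidableEq n] {L : Matrix n n ℝ}

lemma dotProduct_sum_smul_eigenvectorBasis (hL : L.IsHermitian) (J : Finset n) (a b : J → ℝ) :
    (∑ j : J, a j • ⇑(hL.eigenvectorBasis j)) ⬝ᵥ (∑ j : J, b j • ⇑(hL.eigenvectorBasis j)) =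
      ∑ j : J, a j * b j := by
  have := (hL.eigenvectorBasis.orthonormal.comp _ Subtype.val_injective).inner_sum a b univ
  simp only [Function.comp_apply, conj_trivial, EuclideanSpace.inner_eq_star_dotProduct,
    star_trivial, WithLp.ofLp_sum, WithLp.ofLp_smul] at this
  rw [dotProduct_comm, this]

lemma mulVec_sum_smul_eigenvectorBasis (hL : L.IsHermitian) (J : Finset n) (a : J → ℝ) :
    L *ᵥ (∑ j : J, a j • ⇑(hL.eigenvectorBasis j)) =
      ∑ j : J, (hL.eigenvalues j * a j) • ⇑(hL.eigenvectorBasis j) := by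
  simp only [mulVec_sum, mulVec_smul, hL.mulVec_eigenvectorBasis, smul_smul, mul_comm]

lemma le_card_filter_eigenvalues_le_muSmallest (hL : L.IsHermitian) {k : ℕ}
    (hk : k < Fintype.card n) :
    k + 1 ≤ #{j | hL.eigenvalues j ≤ muSmallest L (k + 1)} := by
  have hl : sortedEigs L = (univ.val.map hL.eigenvalues).sort (· ≤ ·) := dif_pos hL
  have hlen : k < (sortedEigs L).length := by simpa [hl] using hk
  set t := muSmallest L (k + 1)
  have ht : (sortedEigs L)[k] = t := (List.getD_eq_getElem _ _ hlen).symm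
  calc k + 1 ≤ (sortedEigs L).countP (fun a => decide (a ≤ t)) :=
        ht ▸ (hl ▸ Multiset.pairwise_sort _ _).succ_le_countP_le_getElem hlen
    _ = Multiset.countP (· ≤ t) (univ.val.map hL.eigenvalues) := by
        rw [← Multiset.coe_countP, hl, Multiset.sort_eq]
    _ = #{j | hL.eigenvalues j ≤ t} := by
        rw [Multiset.countP_map]
        rfl

/-- The easy half of the Courant–Fischer min–max theorem. -/
theorem le_muSmallest_of_forall_mulVec_eq_zero (hL : L.IsHermitian) {ι : Type*} [Fintype ι]
    (P : Matrix ι n ℝ) (hP : Fintype.card ι < Fintype.card n) {c : ℝ}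
    (h : ∀ x, P *ᵥ x = 0 → c * (x ⬝ᵥ x) ≤ x ⬝ᵥ (L *ᵥ x)) :
    c ≤ muSmallest L (Fintype.card ι + 1) := by
  set t := muSmallest L (Fintype.card ι + 1)
  set J : Finset n := {j | hL.eigenvalues j ≤ t}
  obtain ⟨a, ha, hPa⟩ := exists_ne_zero_mulVec_sum_smul_eq_zero P
    (fun j : J => ⇑(hL.eigenvectorBasis j))
    (by simpa using hL.le_card_filter_eigenvalues_le_muSmallest hP)
  have hpos : 0 < ∑ j : J, a j * a j := by
    obtain ⟨j, hj⟩ := Function.ne_iff.1 ha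
    exact sum_pos' (fun j _ => mul_self_nonneg _) ⟨j, mem_univ _, mul_self_pos.2 hj⟩
  have hrayleigh : c * ∑ j : J, a j * a j ≤ t * ∑ j : J, a j * a j := by
    have := h _ hPa
    rw [hL.mulVec_sum_smul_eigenvectorBasis, hL.dotProduct_sum_smul_eigenvectorBasis,
      hL.dotProduct_sum_smul_eigenvectorBasis] at this
    refine this.trans ?_
    rw [mul_sum]
    refine sum_le_sum fun j _ => ?_
    rw [mul_left_comm]
    exact mul_le_mul_of_nonneg_right (mem_filter.1 j.2).2 (mul_self_nonneg _)
  exact le_of_mul_le_mul_right hrayleigh hpos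

end Matrix.IsHermitian

/-- If the vertex set of `G` can be partitioned into at most `k` parts each of internal
conductance at least `φ`, then the `(k+1)`-st smallest eigenvalue of the normalized
Laplacian satisfies `λ_{k+1} ≥ φ²/2`. -/
theorem stmt8 {V : Type*} [Fintype V] [DecidableEq V]
    (G : SimpleGraph V) [DecidableRel G.Adj]
    (k : ℕ) (hk : k < Fintype.card V) (φ : ℝ) (hφ : 0 ≤ φ)
    (c : V → Fin k)
    (hclust : ∀ i : Fin k, φ ≤ intConductance G (Finset.univ.filter fun v => c v = i)) :
    φ ^ 2 / 2 ≤ muSmallest (normLap G) (k + 1) := by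
  obtain ⟨v₀⟩ : Nonempty V := Fintype.card_pos_iff.1 (k.zero_le.trans_lt hk)
  have hφ1 : φ ≤ 1 := (hclust (c v₀)).trans (G.intConductance_le_one _)
  let P : Matrix (Fin k) V ℝ := of fun i v => if c v = i then √(G.degree v) else 0
  have hP : ∀ x, P *ᵥ x = 0 → ∀ i, ∑ v with c v = i, √(G.degree v) * x v = 0 := fun x hx i => by
    simpa [P, mulVec, dotProduct, sum_filter, ite_mul] using congrFun hx i
  have := G.isHermitian_normLap.le_muSmallest_of_forall_mulVec_eq_zero P (by simpa using hk)
    fun x hx => G.le_dotProduct_normLap_mulVec c hφ hφ1 hclust (hP x hx)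
  simpa using this
end

section
/- Let M be a symmetric positive semidefinite n×n matrix with eigenvalues 1 ≥ μ₁ ≥ … ≥ μ_n ≥ 0 and orthonormal eigenvectors v₁,…,v_n. Suppose W ∈ ℝ^{n×m} is a matrix each of whose columns lies in the span of v₁,…,v_h. Then for any 1 ≤ j ≤ m, μ_j((MW)ᵀ(MW)) ≥ μ_h² · μ_j(WᵀW). -/
/-!
By Courant–Fischer, `μ_j` is monotone in the Loewner order: if `c • B ≤ A` as quadratic forms
with `c ≥ 0`, then `c μ_j(B) ≤ μ_j(A)`, because for dimension reasons some nonzero vector lies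
both in the span of the top `j` eigenvectors of `B` and in that of the bottom `N - j + 1`
eigenvectors of `A`, and its Rayleigh quotients are `≥ μ_j(B)` and `≤ μ_j(A)` respectively.
Here `x ⬝ (WᵀW) x = ‖Wx‖²` and `x ⬝ ((MW)ᵀMW) x = ‖MWx‖²`, and since `Wx` lies in the span of
`v₁, …, v_h`, on which `M` stretches every eigencomponent by at least `μ_h ≥ 0`, we get
`μ_h² ‖Wx‖² ≤ ‖MWx‖²`.
-/

open Matrix

/-- `muLargest B j` is the `j`-th largest eigenvalue (1-indexed) of a symmetric
real matrix `B`. -/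
noncomputable def muLargest {n : Type*} [Fintype n] [DecidableEq n]
    (B : Matrix n n ℝ) (j : ℕ) : ℝ :=
  (sortedEigs B).getD (Fintype.card n - j) 0

open scoped InnerProductSpace RealInnerProductSpace

lemma LinearIndependent.finrank_span_image_finset {ι K V : Type*} [DivisionRing K]
    [AddCommGroup V] [Module K V] {v : ι → V} (hv : LinearIndependent K v) (s : Finset ι) :
    Module.finrank K (Submodule.span K (v '' s)) = s.card := by
  rw [Set.image_eq_range]
  exact (finrank_span_eq_card
    (hv.comp (Subtype.val : ↥(s : Set ι) → ι) Subtype.val_injective)).trans (by simp)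

lemma LinearMap.map_sum_smul_of_apply_eq_smul {ι R M : Type*} [CommSemiring R]
    [AddCommMonoid M] [Module R M] {T : M →ₗ[R] M} {v : ι → M} {μ : ι → R}
    (hT : ∀ i, T (v i) = μ i • v i) (s : Finset ι) (c : ι → R) :
    T (∑ i ∈ s, c i • v i) = ∑ i ∈ s, (μ i * c i) • v i := by
  simp only [map_sum, map_smul, hT, smul_smul, mul_comm]

namespace Orthonormal

variable {ι E : Type*} [NormedAddCommGroup E] [InnerProductSpace ℝ E] {v : ι → E}
  {T : E →ₗ[ℝ] E} {μ : ι → ℝ} {s : Finset ι} {a : ℝ} {x : E}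

lemma mul_norm_sq_le_inner_apply (hv : Orthonormal ℝ v) (hT : ∀ i, T (v i) = μ i • v i)
    (ha : ∀ i ∈ s, a ≤ μ i) (hx : x ∈ Submodule.span ℝ (v '' s)) :
    a * ‖x‖ ^ 2 ≤ ⟪T x, x⟫ := by
  obtain ⟨c, rfl⟩ := (Submodule.mem_span_image_finset_iff_exists_fun' ℝ).mp hx
  rw [← real_inner_self_eq_norm_sq, T.map_sum_smul_of_apply_eq_smul hT, hv.inner_sum, hv.inner_sum,
    Finset.mul_sum]
  refine Finset.sum_le_sum fun i hi => ?_
  simpa [mul_assoc] using mul_le_mul_of_nonneg_right (ha i hi) (mul_self_nonneg (c i))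

lemma inner_apply_le_mul_norm_sq (hv : Orthonormal ℝ v) (hT : ∀ i, T (v i) = μ i • v i)
    (ha : ∀ i ∈ s, μ i ≤ a) (hx : x ∈ Submodule.span ℝ (v '' s)) :
    ⟪T x, x⟫ ≤ a * ‖x‖ ^ 2 := by
  have := hv.mul_norm_sq_le_inner_apply (T := -T) (μ := -μ) (a := -a)
    (fun i => by simp [hT, neg_smul]) (fun i hi => neg_le_neg (ha i hi)) hx
  simpa [inner_neg_left] using this

lemma mul_norm_sq_le_norm_apply_sq (hv : Orthonormal ℝ v) (hT : ∀ i, T (v i) = μ i • v i)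
    (ha : ∀ i ∈ s, a ≤ μ i ^ 2) (hx : x ∈ Submodule.span ℝ (v '' s)) :
    a * ‖x‖ ^ 2 ≤ ‖T x‖ ^ 2 := by
  obtain ⟨c, rfl⟩ := (Submodule.mem_span_image_finset_iff_exists_fun' ℝ).mp hx
  rw [← real_inner_self_eq_norm_sq, ← real_inner_self_eq_norm_sq, T.map_sum_smul_of_apply_eq_smul hT,
    hv.inner_sum, hv.inner_sum, Finset.mul_sum]
  refine Finset.sum_le_sum fun i hi => ?_
  simp only [conj_trivial]
  exact (mul_le_mul_of_nonneg_right (ha i hi) (mul_self_nonneg (c i))).trans_eq (by ring)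

end Orthonormal

namespace LinearMap.IsSymmetric

variable {E : Type*} [NormedAddCommGroup E] [InnerProductSpace ℝ E] [FiniteDimensional ℝ E]
  {S T : E →ₗ[ℝ] E} {n : ℕ}

theorem mul_eigenvalues_le (hS : S.IsSymmetric) (hT : T.IsSymmetric)
    (hn : Module.finrank ℝ E = n) {c : ℝ} (hc : 0 ≤ c) (hST : ∀ x, c * ⟪S x, x⟫ ≤ ⟪T x, x⟫)
    (k : Fin n) : c * hS.eigenvalues hn k ≤ hT.eigenvalues hn k := by
  set bS := hS.eigenvectorBasis hn
  set bT := hT.eigenvectorBasis hn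
  set U := Submodule.span ℝ (bS '' (Finset.Iic k : Finset (Fin n)))
  set V := Submodule.span ℝ (bT '' (Finset.Ici k : Finset (Fin n)))
  have hUV : ¬ Disjoint U V := fun hdisj => by
    have := Submodule.finrank_add_finrank_le_of_disjoint hdisj
    rw [bS.orthonormal.linearIndependent.finrank_span_image_finset,
      bT.orthonormal.linearIndependent.finrank_span_image_finset, Fin.card_Iic,
      Fin.card_Ici] at this
    omega
  obtain ⟨x, hxU, hxV, hx0⟩ : ∃ x ∈ U, x ∈ V ∧ x ≠ 0 := by
    simpa [Submodule.disjoint_def] using hUV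
  have hS_lower := bS.orthonormal.mul_norm_sq_le_inner_apply (T := S)
    (hS.apply_eigenvectorBasis hn)
    (fun i hi => hS.eigenvalues_antitone hn (Finset.mem_Iic.mp hi)) hxU
  have hT_upper := bT.orthonormal.inner_apply_le_mul_norm_sq (T := T)
    (hT.apply_eigenvectorBasis hn)
    (fun i hi => hT.eigenvalues_antitone hn (Finset.mem_Ici.mp hi)) hxV
  refine le_of_mul_le_mul_right ?_ (by positivity : 0 < ‖x‖ ^ 2)
  calc c * hS.eigenvalues hn k * ‖x‖ ^ 2 ≤ c * ⟪S x, x⟫ := by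
        rw [mul_assoc]; exact mul_le_mul_of_nonneg_left hS_lower hc
    _ ≤ ⟪T x, x⟫ := hST x
    _ ≤ hT.eigenvalues hn k * ‖x‖ ^ 2 := hT_upper

end LinearMap.IsSymmetric

section

variable {ι : Type*} [Fintype ι] [DecidableEq ι] {A B : Matrix ι ι ℝ}

namespace Matrix.IsHermitian

lemma mul_eigenvalues₀_le (hA : A.IsHermitian) (hB : B.IsHermitian) {c : ℝ} (hc : 0 ≤ c)
    (hAB : ∀ x, c * (x ⬝ᵥ B *ᵥ x) ≤ x ⬝ᵥ A *ᵥ x) (k : Fin (Fintype.card ι)) :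
    c * hB.eigenvalues₀ k ≤ hA.eigenvalues₀ k := by
  refine LinearMap.IsSymmetric.mul_eigenvalues_le _ _ _ hc (fun x => ?_) k
  simpa [EuclideanSpace.inner_eq_star_dotProduct, toLpLin_apply] using hAB (WithLp.ofLp x)

end Matrix.IsHermitian

lemma sortedEigs_eq_reverse_ofFn (hB : B.IsHermitian) :
    sortedEigs B = (List.ofFn hB.eigenvalues₀).reverse := by
  rw [sortedEigs, dif_pos hB]
  refine List.Perm.eq_of_pairwise' (Multiset.pairwise_sort _ _)
    (List.pairwise_reverse.mpr hB.eigenvalues₀_antitone.sortedGE_ofFn.pairwise) ?_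
  rw [← Multiset.coe_eq_coe, Multiset.sort_eq, ← Multiset.coe_reverse]
  have := congrArg ((↑) : List ℝ → Multiset ℝ) hB.sort_roots_charpoly_eq_eigenvalues₀
  rw [Multiset.sort_eq, hB.roots_charpoly_eq_eigenvalues] at this
  simpa using this

lemma muLargest_eq_eigenvalues₀ (hB : B.IsHermitian) {j : ℕ} (hj1 : 1 ≤ j)
    (hj : j ≤ Fintype.card ι) :
    muLargest B j = hB.eigenvalues₀ ⟨j - 1, by omega⟩ := by
  rw [muLargest, sortedEigs_eq_reverse_ofFn hB, List.getD_eq_getElem _ _ (by simp; omega)]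
  simp only [List.getElem_reverse, List.getElem_ofFn, List.length_ofFn]
  congr 2
  omega

lemma mul_muLargest_le (hA : A.IsHermitian) (hB : B.IsHermitian) {c : ℝ} (hc : 0 ≤ c)
    (hAB : ∀ x, c * (x ⬝ᵥ B *ᵥ x) ≤ x ⬝ᵥ A *ᵥ x) {j : ℕ} (hj1 : 1 ≤ j)
    (hj : j ≤ Fintype.card ι) : c * muLargest B j ≤ muLargest A j := by
  rw [muLargest_eq_eigenvalues₀ hA hj1 hj, muLargest_eq_eigenvalues₀ hB hj1 hj]
  exact hA.mul_eigenvalues₀_le hB hc hAB _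

lemma mul_dotProduct_self_le_of_mem_span {κ : Type*} [DecidableEq κ] (M : Matrix ι ι ℝ)
    {v : κ → ι → ℝ} {μ : κ → ℝ} (hv : ∀ i j, v i ⬝ᵥ v j = if i = j then 1 else 0)
    (hMv : ∀ i, M *ᵥ v i = μ i • v i) {s : Finset κ} {a : ℝ} (ha : ∀ i ∈ s, a ≤ μ i ^ 2)
    {u : ι → ℝ} (hu : u ∈ Submodule.span ℝ (v '' s)) :
    a * (u ⬝ᵥ u) ≤ (M *ᵥ u) ⬝ᵥ (M *ᵥ u) := by
  let e : (ι → ℝ) →ₗ[ℝ] EuclideanSpace ℝ ι := (WithLp.linearEquiv 2 ℝ (ι → ℝ)).symm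
  have hv' : Orthonormal ℝ (e ∘ v) := by
    rw [orthonormal_iff_ite]
    intro i j
    simpa [e, EuclideanSpace.inner_toLp_toLp, eq_comm] using hv j i
  have hu' : e u ∈ Submodule.span ℝ ((e ∘ v) '' s) := by
    rw [Set.image_comp]
    exact Submodule.apply_mem_span_image_of_mem_span e hu
  have := hv'.mul_norm_sq_le_norm_apply_sq (T := toEuclideanLin M)
    (fun i => by simp [e, hMv]) ha hu'
  rw [← real_inner_self_eq_norm_sq, ← real_inner_self_eq_norm_sq] at this
  -- the inner product of `EuclideanSpace` is definitionally the dot product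
  exact this

end

/-- Let `M` be a symmetric PSD `n×n` matrix with eigenvalues
`1 ≥ μ₁ ≥ … ≥ μ_n ≥ 0` and orthonormal eigenvectors `v₁, …, v_n`.  If every column of
`W` lies in the span of `v₁, …, v_h`, then for all `1 ≤ j ≤ m`,
`μ_j((MW)ᵀ(MW)) ≥ μ_h² · μ_j(WᵀW)`. -/
theorem stmt11 {n : ℕ} (M : Matrix (Fin n) (Fin n) ℝ)
    (μ : Fin n → ℝ) (v : Fin n → (Fin n → ℝ))
    (hortho : ∀ i j, v i ⬝ᵥ v j = if i = j then (1 : ℝ) else 0)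
    (heig : ∀ i, M *ᵥ v i = μ i • v i)
    (hanti : ∀ i j : Fin n, i ≤ j → μ j ≤ μ i)
    (h0 : ∀ i, 0 ≤ μ i)
    (m h : ℕ) (hh1 : 1 ≤ h) (hhn : h ≤ n)
    (W : Matrix (Fin n) (Fin m) ℝ)
    (hW : ∀ j : Fin m, (fun i => W i j) ∈
      Submodule.span ℝ {x : Fin n → ℝ | ∃ i : Fin n, (i : ℕ) < h ∧ x = v i})
    (j : ℕ) (hj1 : 1 ≤ j) (hjm : j ≤ m) :
    (μ ⟨h - 1, by omega⟩) ^ 2 * muLargest (Wᵀ * W) j ≤ muLargest ((M * W)ᵀ * (M * W)) j := by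
  set k : Fin n := ⟨h - 1, by omega⟩
  have hspan : {x : Fin n → ℝ | ∃ i : Fin n, (i : ℕ) < h ∧ x = v i} =
      v '' (Finset.Iic k : Finset (Fin n)) := by
    ext x
    simp only [Set.mem_ofPred_eq, Set.mem_image, Finset.coe_Iic, Set.mem_Iic, Fin.le_def, k]
    exact exists_congr fun i => by constructor <;> rintro ⟨hi, rfl⟩ <;> exact ⟨by omega, rfl⟩
  have hWx : ∀ x, W *ᵥ x ∈ Submodule.span ℝ (v '' (Finset.Iic k : Finset (Fin n))) := by
    have : LinearMap.range W.mulVecLin ≤ Submodule.span ℝ (v '' (Finset.Iic k)) := by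
      rw [range_mulVecLin, Submodule.span_le, ← hspan]
      rintro _ ⟨l, rfl⟩
      exact hW l
    exact fun x => this ⟨x, rfl⟩
  have hquad : ∀ (V : Matrix (Fin n) (Fin m) ℝ) x, x ⬝ᵥ (Vᵀ * V) *ᵥ x = (V *ᵥ x) ⬝ᵥ (V *ᵥ x) :=
    fun V x => by rw [← mulVec_mulVec, dotProduct_mulVec, vecMul_transpose]
  have hsymm : ∀ V : Matrix (Fin n) (Fin m) ℝ, (Vᵀ * V).IsHermitian := fun V => by
    simpa using isHermitian_conjTranspose_mul_self V
  refine mul_muLargest_le (hsymm _) (hsymm _) (sq_nonneg _) (fun x => ?_) hj1 (by simpa using hjm)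
  rw [hquad, hquad, ← mulVec_mulVec]
  exact mul_dotProduct_self_le_of_mem_span M hortho heig
    (fun i hi => pow_le_pow_left₀ (h0 k) (hanti i k (Finset.mem_Iic.mp hi)) 2) (hWx x)
end

section
/- Let G = (V,E) be a d-regular φ-expander on n vertices, with each edge independently labeled 0 or 1 uniformly at random. Form the 2-lift G′ on vertex set V×{0,1} where each edge (u,v) with label 0 yields edges (u⁰,v⁰),(u¹,v¹) and each edge with label 1 yields edges (u⁰,v¹),(u¹,v⁰). Then with probability at least 1 − 2^{2n} e^{−dn/256}, every set C ⊆ V×{0,1} with |C| ≤ n has edge expansion at least min(φ/4, 1/32) in G′. -/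
/-!
Split a set `C` of lifted vertices by how many of the two lifts of each vertex it contains: full
fibres `A`, half fibres `B` and empty fibres `O`, so that `|C| = 2|A| + |B|`. Whatever the labels,
every edge of `G` from `A` to `Aᶜ` or from `B` to `O` lifts to an edge leaving `C`, and an edge
inside `B` lifts to two such edges exactly when its label is not the one keeping both lifts in `C`.
Since `|A| ≤ n/2`, the expansion of `A` and `d`-regularity show that a boundary smaller than
`α d |C|`, with `α = min(φ/4, 1/32)`, forces fewer than `|E(B)|/2 - (1 - 2α) d|B|/4` of the
labels inside `B` to be wrong. If `|B| ≤ n/2`, the expansion of `B` rules this out; otherwise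
`d|B| > dn/2` and Hoeffding's inequality for the independent labels bounds the probability by
`exp(-dn/256)`. A union bound over the `2^{2n}` sets `C` concludes.
-/

open scoped Classical

/-- The 2-lift of a graph `G` determined by an edge labelling `ℓ`: vertices `V × Bool`,
and `(u,a)` is adjacent to `(v,b)` iff `G.Adj u v` and `a xor b = ℓ s(u,v)`. -/
def lift2 {V : Type*} (G : SimpleGraph V) (ℓ : Sym2 V → Bool) :
    SimpleGraph (V × Bool) where
  Adj p q := G.Adj p.1 q.1 ∧ xor p.2 q.2 = ℓ s(p.1, q.1)
  symm := by
    constructor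
    intro p q h
    refine ⟨h.1.symm, ?_⟩
    rw [Bool.xor_comm, Sym2.eq_swap]
    exact h.2
  loopless := by
    constructor
    intro p h
    exact G.irrefl h.1

open Finset Real

lemma one_add_exp_neg_le (l : ℝ) : 1 + exp (-l) ≤ 2 * exp (l ^ 2 / 8 - l / 2) := by
  have hcosh : 1 + exp (-l) = 2 * exp (-(l / 2)) * cosh (l / 2) := by
    have h1 : exp (-(l / 2)) * exp (l / 2) = 1 := by rw [← exp_add, neg_add_cancel, exp_zero]
    have h2 : exp (-(l / 2)) * exp (-(l / 2)) = exp (-l) := by rw [← exp_add]; ring_nf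
    rw [cosh_eq]
    linear_combination -h1 - h2
  calc 1 + exp (-l) = 2 * exp (-(l / 2)) * cosh (l / 2) := hcosh
    _ ≤ 2 * exp (-(l / 2)) * exp ((l / 2) ^ 2 / 2) := by gcongr; exact cosh_le_exp_half_sq _
    _ = 2 * exp (l ^ 2 / 8 - l / 2) := by rw [mul_assoc, ← exp_add]; ring_nf

lemma card_filter_lt_le_sum_exp {α : Type*} (s : Finset α) (X : α → ℝ) (c : ℝ) {l : ℝ}
    (hl : 0 ≤ l) : (#{a ∈ s | X a < c} : ℝ) ≤ ∑ a ∈ s, exp (l * (c - X a)) := by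
  rw [card_eq_sum_ones, Nat.cast_sum, Nat.cast_one]
  calc ∑ a ∈ s with X a < c, (1 : ℝ)
      ≤ ∑ a ∈ s with X a < c, exp (l * (c - X a)) :=
        sum_le_sum fun a ha => one_le_exp (mul_nonneg hl (sub_nonneg.2 (mem_filter.1 ha).2.le))
    _ ≤ ∑ a ∈ s, exp (l * (c - X a)) :=
        sum_le_sum_of_subset_of_nonneg (filter_subset _ _) fun _ _ _ => (exp_pos _).le

section Hoeffding

variable {ι : Type*} [Fintype ι] [DecidableEq ι]

lemma sum_exp_neg_mul_card_filter_ne_le (E : Finset ι) (τ : ι → Bool) (l : ℝ) :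
    ∑ ℓ : ι → Bool, exp (-l * #{e ∈ E | ℓ e ≠ τ e})
      ≤ 2 ^ Fintype.card ι * exp (#E * (l ^ 2 / 8 - l / 2)) := by
  have hprod (ℓ : ι → Bool) : exp (-l * #{e ∈ E | ℓ e ≠ τ e})
      = ∏ e, exp (-l * if e ∈ E ∧ ℓ e ≠ τ e then 1 else 0) := by
    rw [← exp_sum, ← mul_sum, ← natCast_card_filter]
    congr 4
    ext
    simp
  have hfactor (e : ι) : ∑ b : Bool, exp (-l * if e ∈ E ∧ b ≠ τ e then 1 else 0)
      ≤ 2 * exp (if e ∈ E then l ^ 2 / 8 - l / 2 else 0) := by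
    by_cases he : e ∈ E
    · cases τ e <;> simpa [he, add_comm] using one_add_exp_neg_le l
    · simp [he]
  calc ∑ ℓ : ι → Bool, exp (-l * #{e ∈ E | ℓ e ≠ τ e})
      = ∏ e, ∑ b : Bool, exp (-l * if e ∈ E ∧ b ≠ τ e then 1 else 0) := by
        simp only [hprod, Fintype.prod_sum]
    _ ≤ ∏ e, 2 * exp (if e ∈ E then l ^ 2 / 8 - l / 2 else 0) :=
        prod_le_prod (fun _ _ => by positivity) fun e _ => hfactor e
    _ = 2 ^ Fintype.card ι * exp (#E * (l ^ 2 / 8 - l / 2)) := by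
        rw [prod_mul_distrib, prod_const, ← exp_sum, sum_ite_mem, univ_inter, sum_const,
          nsmul_eq_mul, card_univ]

theorem card_filter_card_filter_ne_lt_le (E : Finset ι) (τ : ι → Bool) {t m : ℝ} (ht : 0 ≤ t)
    (hm : (#E : ℝ) ≤ m) :
    (#{ℓ : ι → Bool | (#{e ∈ E | ℓ e ≠ τ e} : ℝ) < #E / 2 - t} : ℝ)
      ≤ 2 ^ Fintype.card ι * exp (-2 * t ^ 2 / m) := by
  have hm0 : 0 ≤ m := (Nat.cast_nonneg _).trans hm
  -- Chernoff's method with parameter `l = 4t/m`; for `m = 0` it degenerates to `l = 0`.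
  set l := 4 * t / m
  have hexponent : l * (#E / 2 - t) + #E * (l ^ 2 / 8 - l / 2) ≤ -2 * t ^ 2 / m := by
    rcases hm0.eq_or_lt with rfl | hm_pos
    · simp [l]
    · have hslack : 0 ≤ 2 * t ^ 2 * (m - #E) / m ^ 2 :=
        div_nonneg (mul_nonneg (by positivity) (sub_nonneg.2 hm)) (by positivity)
      have : l * (#E / 2 - t) + #E * (l ^ 2 / 8 - l / 2)
          = -2 * t ^ 2 / m - 2 * t ^ 2 * (m - #E) / m ^ 2 := by
        simp only [l]
        field_simp
        ring
      linarith
  calc (#{ℓ : ι → Bool | (#{e ∈ E | ℓ e ≠ τ e} : ℝ) < #E / 2 - t} : ℝ)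
      ≤ ∑ ℓ : ι → Bool, exp (l * (#E / 2 - t - #{e ∈ E | ℓ e ≠ τ e})) :=
        card_filter_lt_le_sum_exp _ _ _ (by positivity)
    _ = exp (l * (#E / 2 - t)) * ∑ ℓ : ι → Bool, exp (-l * #{e ∈ E | ℓ e ≠ τ e}) := by
        rw [mul_sum]
        refine sum_congr rfl fun ℓ _ => ?_
        rw [← exp_add]
        ring_nf
    _ ≤ exp (l * (#E / 2 - t)) * (2 ^ Fintype.card ι * exp (#E * (l ^ 2 / 8 - l / 2))) := by
        gcongr
        exact sum_exp_neg_mul_card_filter_ne_le E τ l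
    _ = 2 ^ Fintype.card ι * exp (l * (#E / 2 - t) + #E * (l ^ 2 / 8 - l / 2)) := by
        rw [exp_add]
        ring
    _ ≤ 2 ^ Fintype.card ι * exp (-2 * t ^ 2 / m) := by gcongr

end Hoeffding

lemma Sym2.card_filter_mk_mem_eq_two_mul {V : Type*} [Fintype V] [DecidableEq V]
    (F : Finset (Sym2 V)) (hF : ∀ e ∈ F, ¬e.IsDiag) :
    #{p : V × V | s(p.1, p.2) ∈ F} = 2 * #F := by
  let H := SimpleGraph.fromEdgeSet (F : Set (Sym2 V))
  convert H.two_mul_card_edgeFinset.symm using 3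
  · simp only [H, SimpleGraph.fromEdgeSet_adj, mem_coe, iff_self_and]
    exact fun h hxy => hF _ h (Sym2.mk_isDiag_iff.2 hxy)
  · ext e
    simp only [SimpleGraph.mem_edgeFinset, H, SimpleGraph.edgeSet_fromEdgeSet, Set.mem_sdiff,
      mem_coe, Sym2.mem_diagSet, iff_self_and]
    exact hF e

namespace SimpleGraph

variable {V : Type*} (G : SimpleGraph V) [DecidableRel G.Adj]

lemma card_interedges_eq_sum (s t : Finset V) :
    #(G.interedges s t) = ∑ x ∈ s, #{y ∈ t | G.Adj x y} := by
  simp only [interedges_def, card_filter, sum_product]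

lemma natCast_card_interedges {R : Type*} [AddCommMonoidWithOne R] (s t : Finset V) :
    (#(G.interedges s t) : R) = ∑ x ∈ s, ∑ y ∈ t, if G.Adj x y then 1 else 0 := by
  simp only [card_interedges_eq_sum, Nat.cast_sum, natCast_card_filter]

lemma card_interedges_comm (s t : Finset V) : #(G.interedges s t) = #(G.interedges t s) :=
  have := G.symm
  Rel.card_interedges_comm s t

lemma card_interedges_union_right [DecidableEq V] (s : Finset V) {t t' : Finset V}
    (h : Disjoint t t') :
    #(G.interedges s (t ∪ t')) = #(G.interedges s t) + #(G.interedges s t') := by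
  rw [← card_union_of_disjoint (G.interedges_disjoint_right s h)]
  congr 1
  ext
  simp only [mem_interedges_iff, mem_union]
  tauto

variable [Fintype V]

lemma card_interedges_univ_right (s : Finset V) :
    #(G.interedges s univ) = ∑ x ∈ s, G.degree x := by
  simp only [card_interedges_eq_sum, ← card_neighborFinset_eq_degree, neighborFinset_eq_filter]

lemma card_filter_interedges_self [DecidableEq V] (s : Finset V) (P : Sym2 V → Prop)
    [DecidablePred P] :
    #{p ∈ G.interedges s s | P s(p.1, p.2)} = 2 * #{e ∈ G.edgeFinset | e ∈ s.sym2 ∧ P e} := by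
  rw [← Sym2.card_filter_mk_mem_eq_two_mul]
  · congr 1
    ext ⟨x, y⟩
    simp only [mem_filter, mem_interedges_iff, mem_univ, true_and, mem_edgeFinset, mem_edgeSet,
      mk_mem_sym2_iff]
    tauto
  · intro e he
    exact G.not_isDiag_of_mem_edgeSet (mem_edgeFinset.1 (mem_filter.1 he).1)

lemma card_interedges_self [DecidableEq V] (s : Finset V) :
    #(G.interedges s s) = 2 * #{e ∈ G.edgeFinset | e ∈ s.sym2} := by
  simpa using G.card_filter_interedges_self s (fun _ => True)

variable {G} in
lemma IsRegularOfDegree.card_interedges_add_card_interedges_compl [DecidableEq V] {d : ℕ}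
    (hG : G.IsRegularOfDegree d) (s t : Finset V) :
    #(G.interedges s t) + #(G.interedges s tᶜ) = d * #s := by
  rw [← card_interedges_union_right _ _ disjoint_compl_right, union_compl,
    card_interedges_univ_right, sum_congr rfl fun v _ => hG.degree_eq v, sum_const, smul_eq_mul,
    mul_comm]

end SimpleGraph

namespace Lift2

variable {V : Type*} [Fintype V] [DecidableEq V] (G : SimpleGraph V) [DecidableRel G.Adj]
  (C : Finset (V × Bool)) {v : V}

noncomputable def fullFibres : Finset V := {v | (v, false) ∈ C ∧ (v, true) ∈ C}

noncomputable def emptyFibres : Finset V := {v | (v, false) ∉ C ∧ (v, true) ∉ C}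

noncomputable def halfFibres : Finset V := (fullFibres C ∪ emptyFibres C)ᶜ

noncomputable def sheet (v : V) : Bool := decide ((v, true) ∈ C)

/-- The labelling under which every edge of `G` between half fibres lifts to an edge inside `C`. -/
noncomputable def closingLabel : Sym2 V → Bool :=
  Sym2.lift ⟨fun u v => xor (sheet C u) (sheet C v), fun _ _ => Bool.xor_comm _ _⟩

omit [Fintype V] in
@[simp]
lemma closingLabel_mk (u v : V) : closingLabel C s(u, v) = xor (sheet C u) (sheet C v) := rfl

variable {C}

lemma mem_of_mem_fullFibres (hv : v ∈ fullFibres C) (b : Bool) : (v, b) ∈ C := by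
  simp only [fullFibres, mem_filter, mem_univ, true_and] at hv
  cases b
  exacts [hv.1, hv.2]

lemma exists_notMem_of_notMem_fullFibres (hv : v ∉ fullFibres C) : ∃ b, (v, b) ∉ C := by
  simp only [fullFibres, mem_filter, mem_univ, true_and, not_and_or] at hv
  exact hv.elim (⟨false, ·⟩) (⟨true, ·⟩)

lemma notMem_of_mem_emptyFibres (hv : v ∈ emptyFibres C) (b : Bool) : (v, b) ∉ C := by
  simp only [emptyFibres, mem_filter, mem_univ, true_and] at hv
  cases b
  exacts [hv.1, hv.2]

lemma sheet_mem_of_mem_halfFibres (hv : v ∈ halfFibres C) :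
    (v, sheet C v) ∈ C ∧ (v, !sheet C v) ∉ C := by
  simp only [halfFibres, fullFibres, emptyFibres, mem_compl, mem_union, mem_filter, mem_univ,
    true_and] at hv
  by_cases h : (v, true) ∈ C <;> simp_all [sheet]

variable (C)

lemma disjoint_fullFibres_emptyFibres : Disjoint (fullFibres C) (emptyFibres C) := by
  simp only [fullFibres, emptyFibres, disjoint_filter]
  tauto

lemma card_eq_two_mul_card_fullFibres_add : #C = 2 * #(fullFibres C) + #(halfFibres C) := by
  have hfibre (v : V) : ((if (v, true) ∈ C then 1 else 0) + if (v, false) ∈ C then 1 else 0)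
      = 2 * (if v ∈ fullFibres C then 1 else 0) + if v ∈ halfFibres C then 1 else 0 := by
    simp only [halfFibres, fullFibres, emptyFibres, mem_compl, mem_union, mem_filter, mem_univ,
      true_and]
    by_cases h₀ : (v, false) ∈ C <;> by_cases h₁ : (v, true) ∈ C <;> simp [h₀, h₁]
  calc #C = ∑ p : V × Bool, if p ∈ C then 1 else 0 := by simp
    _ = ∑ v, (2 * (if v ∈ fullFibres C then 1 else 0) + if v ∈ halfFibres C then 1 else 0) := by
      simp only [Fintype.sum_prod_type, Fintype.sum_bool, hfibre]
    _ = 2 * #(fullFibres C) + #(halfFibres C) := by simp [sum_add_distrib, mul_comm]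

variable (ℓ : Sym2 V → Bool)

noncomputable def halfEdges : Finset (Sym2 V) := {e ∈ G.edgeFinset | e ∈ (halfFibres C).sym2}

theorem card_interedges_add_le_card_interedges_lift2 :
    #(G.interedges (fullFibres C) (fullFibres C)ᶜ) + #(G.interedges (halfFibres C) (emptyFibres C))
        + 2 * #{e ∈ halfEdges G C | ℓ e ≠ closingLabel C e}
      ≤ #((lift2 G ℓ).interedges C Cᶜ) := by
  rw [halfEdges, filter_filter, ← G.card_filter_interedges_self]
  set A := fullFibres C
  set B := halfFibres C
  set M := {p ∈ G.interedges B B | ℓ s(p.1, p.2) ≠ closingLabel C s(p.1, p.2)}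
  have hAB : Disjoint A B := disjoint_compl_right.mono_left subset_union_left
  have hBO : Disjoint B (emptyFibres C) := (disjoint_compl_right.mono_left subset_union_right).symm
  have hA (t t' : Finset V) : Disjoint (G.interedges A t) (G.interedges B t') :=
    (G.interedges_disjoint_left hAB univ).mono (G.interedges_mono subset_rfl (subset_univ _))
      (G.interedges_mono subset_rfl (subset_univ _))
  have hM : Disjoint (G.interedges A Aᶜ ∪ G.interedges B (emptyFibres C)) M :=
    disjoint_union_left.2 ⟨(hA _ _).mono_right (filter_subset _ _),
      (G.interedges_disjoint_right _ hBO.symm).mono_right (filter_subset _ _)⟩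
  rw [← card_union_of_disjoint (hA _ _), ← card_union_of_disjoint hM]
  refine (card_le_card ?_).trans (card_image_le (f := fun q => (q.1.1, q.2.1)))
  -- Each ordered pair counted on the left is the projection of an edge of the lift leaving `C`.
  rintro ⟨u, v⟩ h
  rw [mem_image]
  simp only [M, mem_union, mem_filter, SimpleGraph.mem_interedges_iff, mem_compl] at h
  rcases h with (⟨hu, hv, huv⟩ | ⟨hu, hv, huv⟩) | ⟨⟨hu, hv, huv⟩, hℓ⟩
  · obtain ⟨b, hb⟩ := exists_notMem_of_notMem_fullFibres hv
    refine ⟨((u, xor (ℓ s(u, v)) b), (v, b)), ?_, rfl⟩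
    exact (SimpleGraph.mk_mem_interedges_iff _).2
      ⟨mem_of_mem_fullFibres hu _, mem_compl.2 hb, huv, by simp⟩
  · refine ⟨((u, sheet C u), (v, xor (sheet C u) (ℓ s(u, v)))), ?_, rfl⟩
    exact (SimpleGraph.mk_mem_interedges_iff _).2 ⟨(sheet_mem_of_mem_halfFibres hu).1,
      mem_compl.2 (notMem_of_mem_emptyFibres hv _), huv, by simp⟩
  · refine ⟨((u, sheet C u), (v, !sheet C v)), ?_, rfl⟩
    rw [closingLabel_mk, ← Bool.eq_not] at hℓ
    exact (SimpleGraph.mk_mem_interedges_iff _).2 ⟨(sheet_mem_of_mem_halfFibres hu).1,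
      mem_compl.2 (sheet_mem_of_mem_halfFibres hv).2, huv, by rw [Bool.xor_not, hℓ]⟩

variable {G} in
lemma mul_card_halfFibres_eq {d : ℕ} (hG : G.IsRegularOfDegree d) :
    d * #(halfFibres C) = #(G.interedges (halfFibres C) (fullFibres C))
      + #(G.interedges (halfFibres C) (emptyFibres C)) + 2 * #(halfEdges G C) := by
  rw [← hG.card_interedges_add_card_interedges_compl (halfFibres C) (halfFibres C), add_comm]
  nth_rw 2 [halfFibres]
  rw [compl_compl, G.card_interedges_union_right _ (disjoint_fullFibres_emptyFibres C),
    G.card_interedges_self, halfEdges]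

variable {G C ℓ} {d : ℕ} {φ α : ℝ}

theorem card_mismatch_lt_of_card_interedges_lift2_lt (hG : G.IsRegularOfDegree d)
    (hexp : ∀ S : Finset V, 2 * #S ≤ Fintype.card V → φ * d * #S ≤ #(G.interedges S Sᶜ))
    (hαφ : α ≤ φ / 4) (hC : #C ≤ Fintype.card V)
    (hbad : (#((lift2 G ℓ).interedges C Cᶜ) : ℝ) < α * d * #C) :
    (#{e ∈ halfEdges G C | ℓ e ≠ closingLabel C e} : ℝ)
      < #(halfEdges G C) / 2 - (1 - 2 * α) * d * #(halfFibres C) / 4 := by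
  have hcard := card_eq_two_mul_card_fullFibres_add C
  have hbdry := card_interedges_add_le_card_interedges_lift2 G C ℓ
  have hdeg := mul_card_halfFibres_eq C hG
  have hBA : #(G.interedges (halfFibres C) (fullFibres C))
      ≤ #(G.interedges (fullFibres C) (fullFibres C)ᶜ) := by
    rw [G.card_interedges_comm]
    exact card_le_card (G.interedges_mono subset_rfl (compl_subset_compl.2 subset_union_left))
  have hexpA := hexp (fullFibres C) (by omega)
  have hφα : 0 ≤ (φ - 4 * α) * (d * #(fullFibres C)) := by
    have : 0 ≤ φ - 4 * α := by linarith
    positivity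
  -- Average the bounds `φ d |A| ≤ e(A, Aᶜ)` and `e(B, A) = d |B| - e(B, O) - 2 |E(B)| ≤ e(A, Aᶜ)`.
  rw [hcard] at hbad
  rify at hbdry hdeg hBA
  push_cast at hbad
  nlinarith

theorem card_filter_card_interedges_lift2_lt_le (hG : G.IsRegularOfDegree d)
    (hexp : ∀ S : Finset V, 2 * #S ≤ Fintype.card V → φ * d * #S ≤ #(G.interedges S Sᶜ))
    (hαφ : α ≤ φ / 4) (hα : α ≤ 1 / 32) (hC : #C ≤ Fintype.card V) :
    (#{ℓ : Sym2 V → Bool | (#((lift2 G ℓ).interedges C Cᶜ) : ℝ) < α * d * #C} : ℝ)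
      ≤ 2 ^ Fintype.card (Sym2 V) * exp (-(d * Fintype.card V) / 256) := by
  have hkey {ℓ : Sym2 V → Bool} := card_mismatch_lt_of_card_interedges_lift2_lt (ℓ := ℓ) hG hexp hαφ hC
  have hBB : 2 * (#(halfEdges G C) : ℝ) + #(G.interedges (halfFibres C) (halfFibres C)ᶜ)
      = d * #(halfFibres C) := by
    have := hG.card_interedges_add_card_interedges_compl (halfFibres C) (halfFibres C)
    rw [G.card_interedges_self] at this
    exact_mod_cast this
  have hnone (h : ∀ ℓ : Sym2 V → Bool, ¬(#((lift2 G ℓ).interedges C Cᶜ) : ℝ) < α * d * #C) :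
      (#{ℓ : Sym2 V → Bool | (#((lift2 G ℓ).interedges C Cᶜ) : ℝ) < α * d * #C} : ℝ)
        ≤ 2 ^ Fintype.card (Sym2 V) * exp (-(d * Fintype.card V) / 256) := by
    rw [filter_false_of_mem fun ℓ _ => h ℓ, card_empty, Nat.cast_zero]
    positivity
  set n := Fintype.card V
  set B := halfFibres C
  set E := halfEdges G C
  have hdB : (0 : ℝ) ≤ d * #B := by positivity
  rcases le_or_gt α 0 with hα0 | hα0
  · exact hnone fun ℓ => not_lt.2 <| (mul_nonpos_of_nonpos_of_nonneg
      (mul_nonpos_of_nonpos_of_nonneg hα0 d.cast_nonneg) (#C).cast_nonneg).trans (Nat.cast_nonneg _)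
  by_cases hB : 2 * #B ≤ n
  · refine hnone fun ℓ hbad => ?_
    -- `B` expands, so `2 #E ≤ (1 - φ) d #B` and the bound on the mismatches would be negative.
    have hexpB := hexp B hB
    have := hkey hbad
    have : 0 ≤ (φ - 2 * α) * (d * #B) := mul_nonneg (by linarith) hdB
    have : (0 : ℝ) ≤ #{e ∈ E | ℓ e ≠ closingLabel C e} := Nat.cast_nonneg _
    nlinarith
  set t := (1 - 2 * α) * d * #B / 4
  have hE : (#E : ℝ) ≤ d * #B / 2 := by
    linarith [Nat.cast_nonneg (α := ℝ) #(G.interedges B Bᶜ)]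
  have ht : 15 / 64 * (d * #B) ≤ t := by
    simp only [t]
    nlinarith
  have hexponent : -2 * t ^ 2 / (d * #B / 2) ≤ -(d * n) / 256 := by
    have hn : (n : ℝ) < 2 * #B := by exact_mod_cast not_le.1 hB
    rcases hdB.eq_or_lt with h0 | h0
    · have hd : (d : ℝ) = 0 := by
        refine (mul_eq_zero.1 h0.symm).resolve_right fun h => ?_
        linarith [Nat.cast_nonneg (α := ℝ) n]
      simp [hd]
    · rw [div_le_div_iff₀ (by positivity) (by norm_num)]
      nlinarith [mul_le_mul_of_nonneg_left hn.le (Nat.cast_nonneg (α := ℝ) d)]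
  calc (#{ℓ : Sym2 V → Bool | (#((lift2 G ℓ).interedges C Cᶜ) : ℝ) < α * d * #C} : ℝ)
      ≤ #{ℓ : Sym2 V → Bool | (#{e ∈ E | ℓ e ≠ closingLabel C e} : ℝ) < #E / 2 - t} := by
        exact_mod_cast card_le_card (monotone_filter_right _ fun ℓ _ hbad => hkey hbad)
    _ ≤ 2 ^ Fintype.card (Sym2 V) * exp (-2 * t ^ 2 / (d * #B / 2)) :=
        card_filter_card_filter_ne_lt_le E (closingLabel C) (by linarith) hE
    _ ≤ 2 ^ Fintype.card (Sym2 V) * exp (-(d * n) / 256) := by gcongr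

end Lift2

lemma card_sub_card_mul_le_card_filter_forall {α β : Type*} [Fintype α] [Fintype β]
    (P : α → β → Prop) [DecidablePred fun a => ∀ b, P a b] [∀ b, DecidablePred fun a => ¬P a b]
    {K : ℝ} (hK : ∀ b, (#{a | ¬P a b} : ℝ) ≤ K) :
    (Fintype.card α : ℝ) - Fintype.card β * K ≤ #{a | ∀ b, P a b} := by
  have hbad : (#{a | ¬∀ b, P a b} : ℝ) ≤ Fintype.card β * K := by
    calc (#{a | ¬∀ b, P a b} : ℝ) ≤ ∑ b, (#{a | ¬P a b} : ℝ) := by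
          refine mod_cast (card_le_card fun a ha => ?_).trans card_biUnion_le
          simp only [not_forall, mem_filter, mem_univ, true_and, mem_biUnion] at ha ⊢
          exact ha
      _ ≤ ∑ _b : β, K := sum_le_sum fun b _ => hK b
      _ = Fintype.card β * K := by simp
  have hsplit := card_filter_add_card_filter_not (s := (univ : Finset α)) fun a => ∀ b, P a b
  rw [card_univ] at hsplit
  rify at hsplit
  linarith

/-- If `G` is a `d`-regular `φ`-expander on `n` vertices and each edge is labelled by an
independent uniform bit, then with probability at least `1 - 2^{2n} e^{-dn/256}` every
set `C` of at most `n` vertices of the 2-lift `G'` has edge expansion at least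
`min(φ/4, 1/32)`. -/
theorem stmt15 {V : Type*} [Fintype V] [DecidableEq V]
    (G : SimpleGraph V) [DecidableRel G.Adj] (d : ℕ) (φ : ℝ)
    (hreg : ∀ v : V, G.degree v = d)
    (hexp : ∀ S : Finset V, 2 * S.card ≤ Fintype.card V →
      φ * d * S.card ≤ ∑ v ∈ S, ∑ w ∈ Sᶜ, if G.Adj v w then (1 : ℝ) else 0) :
    (1 : ℝ) - 2 ^ (2 * Fintype.card V) *
        Real.exp (-((d : ℝ) * Fintype.card V) / 256) ≤
      ((Finset.univ.filter (fun ℓ : Sym2 V → Bool =>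
          ∀ C : Finset (V × Bool), C.card ≤ Fintype.card V →
            min (φ / 4) (1 / 32) * d * C.card ≤
              ∑ p ∈ C, ∑ q ∈ Cᶜ, if (lift2 G ℓ).Adj p q then (1 : ℝ) else 0)).card : ℝ)
        / 2 ^ Fintype.card (Sym2 V) := by
  simp only [← SimpleGraph.natCast_card_interedges] at hexp ⊢
  have hcount := card_sub_card_mul_le_card_filter_forall
    (fun ℓ (C : Finset (V × Bool)) => #C ≤ Fintype.card V →
      min (φ / 4) (1 / 32) * d * #C ≤ (#((lift2 G ℓ).interedges C Cᶜ) : ℝ))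
    (K := 2 ^ Fintype.card (Sym2 V) * Real.exp (-(d * Fintype.card V) / 256)) fun C => by
      by_cases hC : #C ≤ Fintype.card V
      · simpa [hC] using Lift2.card_filter_card_interedges_lift2_lt_le hreg hexp
          (min_le_left _ _) (min_le_right _ _) hC
      · simp only [hC, false_imp_iff, not_true_eq_false, filter_false, card_empty, Nat.cast_zero]
        positivity
  rw [Fintype.card_fun, Fintype.card_bool, Fintype.card_finset, Fintype.card_prod,
    Fintype.card_bool, mul_comm (Fintype.card V)] at hcount
  rw [le_div_iff₀ (by positivity)]
  push_cast at hcount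
  linarith
end
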